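/- arXiv:2102.06067 — 7 statements merged into one kernel-verified Lean document; each statement's English description precedes it below -/
import Mathlib

section
/- Let V be a value co-quantale and (X,d) a V-continuity space. For a subset A ⊆ X, the following are equivalent: (1) for every x ∉ A there exists ε ∈ V with 0 ≺ ε such that every y ∈ X with d(x,y) ≺ ε satisfies y ∉ A (i.e., A is closed in the topology induced by d); (2) for every x ∈ X, if ⨅_{a∈A} d(x,a) = 0 then x ∈ A. -/
/-- A co-quantale: a complete lattice with a commutative monoid operation `+`
whose identity `0` is the bottom element and which distributes over arbitrary infima. -/
class CoQuantale (V : Type*) extends CompleteLattice V, AddCommMonoid V where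
  bot_eq_zero : (⊥ : V) = 0
  add_sInf : ∀ (a : V) (s : Set V), a + sInf s = ⨅ b ∈ s, a + b

/-- Truncated subtraction `a ∸ b := ⨅ {r | a ≤ r + b}`. -/
noncomputable def cosub {V : Type*} [CoQuantale V] (a b : V) : V :=
  sInf {r | a ≤ r + b}

/-- `x` is co-well below `y` (`x ≺ y`). -/
def cwb {L : Type*} [CompleteLattice L] (x y : L) : Prop :=
  ∀ A : Set L, sInf A ≤ x → ∃ a ∈ A, a ≤ y

/-- A value co-quantale: a co-quantale whose underlying lattice is a value lattice. -/
class ValueCoQuantale (V : Type*) extends CoQuantale V where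
  completely_distrib : ∀ a : V, a = sInf {b | cwb a b}
  zero_cwb_top : cwb (0 : V) ⊤
  cwb_inf : ∀ δ δ' : V, cwb (0 : V) δ → cwb (0 : V) δ' → cwb (0 : V) (δ ⊓ δ')

/-- The symmetric distance on a co-quantale. -/
noncomputable def symd {V : Type*} [CoQuantale V] (a b : V) : V :=
  cosub a b ⊔ cosub b a

/-- The positives filter `V⁺ = {ε : V // 0 ≺ ε}`. -/
abbrev Pos (V : Type*) [ValueCoQuantale V] : Type _ := {ε : V // cwb (0 : V) ε}

/-- `Δ : V⁺ → V⁺` is a modulus of uniform continuity for `f`. -/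
def IsModulus {V : Type*} [ValueCoQuantale V] {M N : Type*}
    (dM : M → M → V) (dN : N → N → V) (f : M → N) (Δ : Pos V → Pos V) : Prop :=
  ∀ x y : M, ∀ ε : Pos V, dM x y ≤ (Δ ε).1 → dN (f x) (f y) ≤ ε.1

/-- Uniform convergence of a sequence of maps. -/
def UnifConv {V : Type*} [ValueCoQuantale V] {M N : Type*}
    (dN : N → N → V) (f : ℕ → M → N) (g : M → N) : Prop :=
  ∀ ε : V, cwb (0 : V) ε → ∃ n : ℕ, ∀ m ≥ n, ∀ x : M, dN (f m x) (g x) ≤ ε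

/-- `l` is a `D`-ultralimit of the family `a`, w.r.t. the symmetric distance on `V`. -/
def IsUltralimit {V : Type*} [ValueCoQuantale V] {I : Type*}
    (D : Ultrafilter I) (a : I → V) (l : V) : Prop :=
  ∀ ε : V, cwb (0 : V) ε → {i | symd l (a i) ≤ ε} ∈ D

lemma cwb_mono_left {L : Type*} [CompleteLattice L] {a b y : L} (h : a ≤ b)
    (hb : cwb b y) : cwb a y := fun S hS => hb S (hS.trans h)

lemma cwb_mono_right {L : Type*} [CompleteLattice L] {x a b : L} (h : a ≤ b)
    (hx : cwb x a) : cwb x b := fun S hS =>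
  (hx S hS).imp fun c hc => ⟨hc.1, hc.2.trans h⟩

lemma cwb_interp {V : Type*} [ValueCoQuantale V] {x y : V} (h : cwb x y) :
    ∃ z : V, cwb x z ∧ cwb z y := by
  have hD : sInf {e : V | ∃ c, cwb x c ∧ cwb c e} ≤ x := by
    conv_rhs => rw [ValueCoQuantale.completely_distrib x]
    refine le_sInf fun c hc => ?_
    have : c = sInf {e | cwb c e} := ValueCoQuantale.completely_distrib c
    rw [this]
    exact sInf_le_sInf fun e he => ⟨c, hc, he⟩
  obtain ⟨e, ⟨c, hxc, hce⟩, hey⟩ := h _ hD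
  exact ⟨c, hxc, cwb_mono_right hey hce⟩

/-- characterization of closed subsets of a `V`-continuity space. -/
theorem closed_iff_dist_zero_mem {V : Type*} [ValueCoQuantale V] {X : Type*}
    (d : X → X → V)
    (hrefl : ∀ x : X, d x x = 0)
    (htrans : ∀ x y z : X, d x y ≤ d x z + d z y)
    (A : Set X) :
    (∀ x : X, x ∉ A → ∃ ε : V, cwb (0 : V) ε ∧ ∀ y : X, cwb (d x y) ε → y ∉ A) ↔
    (∀ x : X, (⨅ a ∈ A, d x a) = 0 → x ∈ A) := by
  constructor
  · intro h x hx
    by_contra hxA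
    obtain ⟨ε, hε, hεA⟩ := h x hxA
    obtain ⟨δ, hδ, hδε⟩ := cwb_interp hε
    have hS : sInf ((fun a => d x a) '' A) ≤ 0 := by
      rw [sInf_image, hx]
    obtain ⟨v, ⟨a, haA, rfl⟩, hv⟩ := hδ _ hS
    exact hεA a (cwb_mono_left hv hδε) haA
  · intro h x hxA
    have hr : ¬ (⨅ a ∈ A, d x a) ≤ (0 : V) := by
      intro hle
      refine hxA (h x (le_antisymm hle ?_))
      rw [← CoQuantale.bot_eq_zero]
      exact bot_le
    by_contra hcon
    push_neg at hcon
    apply hr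
    have hsub : {b : V | cwb (0 : V) b} ⊆ {b : V | cwb (⨅ a ∈ A, d x a) b} := by
      intro ε hε
      obtain ⟨y, hy, hyA⟩ := hcon ε hε
      have hle : (⨅ a ∈ A, d x a) ≤ d x y := biInf_le _ hyA
      exact cwb_mono_left hle hy
    calc (⨅ a ∈ A, d x a) = sInf {b | cwb (⨅ a ∈ A, d x a) b} :=
          ValueCoQuantale.completely_distrib _
      _ ≤ sInf {b | cwb (0 : V) b} := sInf_le_sInf hsub
      _ = 0 := (ValueCoQuantale.completely_distrib (0 : V)).symm
end

section
/- Let V be a value co-quantale, (X,d) a V-continuity space, x ∈ X, and ε ∈ V with 0 ≺ ε. Let C := {y ∈ X : d(y,x) ≤ ε} (the dual closed disc of radius ε centered at x). Then for every y ∈ X, if ⨅_{z∈C} d(y,z) = 0 then y ∈ C; that is, C is closed in the topology induced by d. -/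
lemma coq_add_le_add_left {V : Type*} [CoQuantale V] {b c : V} (h : b ≤ c) (a : V) :
    a + b ≤ a + c := by
  have : a + sInf {b, c} = ⨅ x ∈ ({b, c} : Set V), a + x := CoQuantale.add_sInf a _
  rw [sInf_pair, inf_eq_left.mpr h] at this
  rw [this]
  exact iInf₂_le c (by simp)

/-- dual closed discs are closed in the topology induced by `d`. -/
theorem dual_closed_disc_closed {V : Type*} [ValueCoQuantale V] {X : Type*}
    (d : X → X → V)
    (hrefl : ∀ x : X, d x x = 0)
    (htrans : ∀ x y z : X, d x y ≤ d x z + d z y)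
    (x : X) (ε : V) (hε : cwb (0 : V) ε) :
    ∀ y : X, (⨅ z ∈ {y' : X | d y' x ≤ ε}, d y z) = 0 → y ∈ {y' : X | d y' x ≤ ε} := by
  intro y h
  have key : d y x ≤ ε + ⨅ z ∈ {y' : X | d y' x ≤ ε}, d y z := by
    have h1 : (⨅ z ∈ {y' : X | d y' x ≤ ε}, d y z)
        = sInf (d y '' {y' : X | d y' x ≤ ε}) := by
      rw [sInf_image]
    rw [h1, CoQuantale.add_sInf]
    refine le_iInf fun b => le_iInf fun hb => ?_
    obtain ⟨z, hz, rfl⟩ := hb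
    calc d y x ≤ d y z + d z x := htrans y x z
    _ ≤ d y z + ε := coq_add_le_add_left hz _ |>.trans_eq (add_comm _ _) |>.trans_eq (add_comm _ _)
    _ = ε + d y z := add_comm _ _
  rw [h, add_zero] at key
  exact key
end

section
/- Let V be a value co-quantale and (M,d_M), (N,d_N), (K,d_K) V-continuity spaces. Let (f_n)_{n∈ℕ} be a sequence of maps from M to N uniformly converging to f : M → N, and (g_n)_{n∈ℕ} a sequence of maps from N to K uniformly converging to g : N → K. If g is uniformly continuous (i.e., admits a modulus of uniform continuity), then (g_n ∘ f_n)_{n∈ℕ} uniformly converges to g ∘ f. -/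
lemma cq_add_le_add_right {V : Type*} [CoQuantale V] {a a' : V} (h : a ≤ a') (b : V) :
    b + a ≤ b + a' := by
  have key : b + sInf ({a, a'} : Set V) = ⨅ c ∈ ({a, a'} : Set V), b + c :=
    CoQuantale.add_sInf b {a, a'}
  rw [sInf_pair, inf_eq_left.mpr h] at key
  rw [key]
  exact iInf₂_le a' (by simp)

lemma cq_add_le_add {V : Type*} [CoQuantale V] {a a' b b' : V} (ha : a ≤ a') (hb : b ≤ b') :
    a + b ≤ a' + b' := by
  calc a + b ≤ a + b' := cq_add_le_add_right hb a
    _ = b' + a := add_comm _ _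
    _ ≤ b' + a' := cq_add_le_add_right ha b'
    _ = a' + b' := add_comm _ _

/-- uniform convergence is preserved under composition when the
limit of the outer sequence is uniformly continuous. -/
theorem unifConv_comp {V : Type*} [ValueCoQuantale V] {M N K : Type*}
    (dM : M → M → V) (dN : N → N → V) (dK : K → K → V)
    (hreflM : ∀ x : M, dM x x = 0) (htransM : ∀ x y z : M, dM x y ≤ dM x z + dM z y)
    (hreflN : ∀ x : N, dN x x = 0) (htransN : ∀ x y z : N, dN x y ≤ dN x z + dN z y)
    (hreflK : ∀ x : K, dK x x = 0) (htransK : ∀ x y z : K, dK x y ≤ dK x z + dK z y)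
    (f : ℕ → M → N) (F : M → N) (g : ℕ → N → K) (G : N → K)
    (hf : UnifConv dN f F) (hg : UnifConv dK g G)
    (hG : ∃ Δ : Pos V → Pos V, IsModulus dN dK G Δ) :
    UnifConv dK (fun n => g n ∘ f n) (G ∘ F) := by
  obtain ⟨Δ, hΔ⟩ := hG
  intro ε hε
  set P : Set V := {b | cwb (0 : V) b} with hP
  set S : Set V := {x | ∃ b ∈ P, ∃ c ∈ P, x = b + c} with hSdef
  have h0 : (0 : V) = sInf P := ValueCoQuantale.completely_distrib 0
  have hS : sInf S ≤ 0 := by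
    have h1 : (0 : V) = ⨅ b ∈ P, ⨅ c ∈ P, b + c := by
      calc (0 : V) = sInf P + sInf P := by rw [← h0, add_zero]
        _ = ⨅ b ∈ P, sInf P + b := CoQuantale.add_sInf _ _
        _ = ⨅ b ∈ P, ⨅ c ∈ P, b + c := by
            refine iInf_congr fun b => iInf_congr fun hb => ?_
            rw [add_comm]
            exact CoQuantale.add_sInf b P
    rw [h1]
    exact le_iInf₂ fun b hb => le_iInf₂ fun c hc => sInf_le ⟨b, hb, c, hc, rfl⟩
  obtain ⟨x0, hx0S, hx0ε⟩ := hε S hS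
  obtain ⟨b, hb, c, hc, rfl⟩ := hx0S
  obtain ⟨n1, hn1⟩ := hg b hb
  obtain ⟨n2, hn2⟩ := hf (Δ ⟨c, hc⟩).1 (Δ ⟨c, hc⟩).2
  refine ⟨max n1 n2, fun m hm x => ?_⟩
  calc dK (g m (f m x)) (G (F x))
      ≤ dK (g m (f m x)) (G (f m x)) + dK (G (f m x)) (G (F x)) := htransK _ _ _
    _ ≤ b + c := by
        refine cq_add_le_add (hn1 m (le_trans (le_max_left _ _) hm) (f m x)) ?_
        exact hΔ (f m x) (F x) ⟨c, hc⟩ (hn2 m (le_trans (le_max_right _ _) hm) x)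
    _ ≤ ε := hx0ε
end

section
/- Let V be a value co-quantale carrying its symmetric distance d_V(a,b) := (a ∸ b) ⊔ (b ∸ a), let (M,d_M) and (N,d_N) be V-continuity spaces, and give M × N the distance d((x₁,y₁),(x₂,y₂)) := d_M(x₁,x₂) ⊔ d_N(y₁,y₂). If f : M × N → V has modulus of uniform continuity Δ : V⁺ → V⁺ (with respect to d_V on the codomain), then Δ is also a modulus of uniform continuity for the maps M → (V,d_V) given by x ↦ ⨆_{y∈N} f(x,y) and x ↦ ⨅_{y∈N} f(x,y). -/
section Aux
variable {V : Type*} [CoQuantale V]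

lemma add_inf_le (a b c : V) : b ≤ c → a + b ≤ a + c := by
  intro h
  have := CoQuantale.add_sInf a {b, c}
  have hbc : sInf ({b, c} : Set V) = b := by
    rw [sInf_pair, inf_eq_left.mpr h]
  rw [hbc] at this
  rw [this]
  exact iInf_le_of_le c (iInf_le_of_le (by simp) le_rfl)

lemma add_iInf' {I : Type*} (a : V) (f : I → V) : a + ⨅ i, f i = ⨅ i, a + f i := by
  rw [iInf, CoQuantale.add_sInf, iInf_range]

lemma le_cosub_add (a b : V) : a ≤ cosub a b + b := by
  rw [cosub, add_comm, CoQuantale.add_sInf]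
  exact le_iInf fun r => le_iInf fun hr => by rw [add_comm]; exact hr

lemma cosub_le_iff {a b r : V} : cosub a b ≤ r ↔ a ≤ r + b := by
  constructor
  · intro h
    calc a ≤ cosub a b + b := le_cosub_add a b
    _ ≤ r + b := by rw [add_comm, add_comm r b]; exact add_inf_le _ _ _ h
  · intro h; exact sInf_le h

lemma symd_le_iff {a b ε : V} : symd a b ≤ ε ↔ a ≤ ε + b ∧ b ≤ ε + a := by
  rw [symd, sup_le_iff, cosub_le_iff, cosub_le_iff]

end Aux

/-- a modulus of uniform continuity for `f : M × N → V` is also a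
modulus for `x ↦ ⨆ y, f (x,y)` and `x ↦ ⨅ y, f (x,y)`. -/
theorem modulus_sup_inf {V : Type*} [ValueCoQuantale V] {M N : Type*}
    (dM : M → M → V) (dN : N → N → V)
    (hreflM : ∀ x : M, dM x x = 0) (htransM : ∀ x y z : M, dM x y ≤ dM x z + dM z y)
    (hreflN : ∀ x : N, dN x x = 0) (htransN : ∀ x y z : N, dN x y ≤ dN x z + dN z y)
    (f : M × N → V) (Δ : Pos V → Pos V)
    (hf : IsModulus (fun p q : M × N => dM p.1 q.1 ⊔ dN p.2 q.2)
      (fun a b : V => symd a b) f Δ) :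
    IsModulus dM (fun a b : V => symd a b) (fun x : M => ⨆ y : N, f (x, y)) Δ ∧
    IsModulus dM (fun a b : V => symd a b) (fun x : M => ⨅ y : N, f (x, y)) Δ := by
  have key : ∀ x y : M, ∀ ε : Pos V, dM x y ≤ (Δ ε).1 →
      ∀ z : N, f (x, z) ≤ ε.1 + f (y, z) ∧ f (y, z) ≤ ε.1 + f (x, z) := by
    intro x y ε h z
    have := hf (x, z) (y, z) ε (by
      simp only
      rw [hreflN z]
      exact sup_le h (le_trans (le_of_eq (CoQuantale.bot_eq_zero (V := V)).symm) bot_le))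
    exact symd_le_iff.mp this
  constructor
  · intro x y ε h
    have k := key x y ε h
    rw [symd_le_iff]
    constructor
    · refine iSup_le fun z => le_trans (k z).1 ?_
      exact add_inf_le _ _ _ (le_iSup (fun z => f (y, z)) z)
    · refine iSup_le fun z => le_trans (k z).2 ?_
      exact add_inf_le _ _ _ (le_iSup (fun z => f (x, z)) z)
  · intro x y ε h
    have k := key x y ε h
    rw [symd_le_iff]
    constructor
    · rw [add_iInf']
      exact le_iInf fun z => le_trans (iInf_le _ z) (k z).1
    · rw [add_iInf']
      exact le_iInf fun z => le_trans (iInf_le _ z) (k z).2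
end

section
/- Let V be a co-divisible value co-quantale with symmetric distance d_V, let D be an ultrafilter on a set I, let (a_i)_{i∈I} be a family in V, and let a be a D-ultralimit of (a_i)_{i∈I}. If b ∈ V satisfies a ≤ b and 0 ≺ b ∸ a, then there exists A ∈ D such that a_i ≤ b for all i ∈ A. -/
lemma cq_add_mono_right {V : Type*} [CoQuantale V] (a : V) {x y : V} (h : x ≤ y) :
    a + x ≤ a + y := by
  have h1 : sInf ({x, y} : Set V) = x := by
    rw [sInf_pair]; exact inf_eq_left.mpr h
  have h2 := CoQuantale.add_sInf a ({x, y} : Set V)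
  rw [h1] at h2
  rw [h2]
  exact iInf_le_of_le y (iInf_le_of_le (by simp) le_rfl)

lemma cq_le_cosub_add {V : Type*} [CoQuantale V] (a b : V) : a ≤ cosub a b + b := by
  rw [cosub, add_comm, CoQuantale.add_sInf]
  refine le_iInf fun r => le_iInf fun hr => ?_
  rw [add_comm]; exact hr

/-- in a co-divisible value co-quantale, a strict-above bound on a
`D`-ultralimit yields a `D`-large set of indices with `a i ≤ b`. -/
theorem ultralimit_strong_bound {V : Type*} [ValueCoQuantale V]
    (hdiv : ∀ a b : V, a ≤ b → ∃ c : V, b = a + c)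
    {I : Type*} (D : Ultrafilter I) (a : I → V) (l : V) (hl : IsUltralimit D a l)
    (b : V) (hlb : l ≤ b) (hpos : cwb (0 : V) (cosub b l)) :
    ∃ A ∈ D, ∀ i ∈ A, a i ≤ b := by
  refine ⟨{i | symd l (a i) ≤ cosub b l}, hl _ hpos, fun i hi => ?_⟩
  obtain ⟨c, hc⟩ := hdiv l b hlb
  have hcbl : cosub b l ≤ c := sInf_le (by rw [Set.mem_setOf_eq, add_comm, ← hc])
  have h1 : cosub (a i) l ≤ cosub b l :=
    le_trans (le_sup_right.trans_eq rfl) hi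
  calc a i ≤ cosub (a i) l + l := cq_le_cosub_add _ _
    _ ≤ c + l := by
        rw [add_comm, add_comm c l]
        exact cq_add_mono_right l (h1.trans hcbl)
    _ = b := by rw [hc, add_comm]
end

section
/- Let V be a value co-quantale, K a nonempty set, and (a_k)_{k∈K} a family in V. Then: (1) ⨅_{k∈K} ⨆_{l∈K} (a_l ∸ a_k) = 0 if and only if for every ε ∈ V⁺ there exists k ∈ K with (⨆_{l∈K} a_l) ∸ ε ≤ a_k; (2) ⨅_{k∈K} ⨆_{l∈K} (a_k ∸ a_l) = 0 if and only if for every ε ∈ V⁺ there exists k ∈ K with a_k ∸ ε ≤ ⨅_{l∈K} a_l. -/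
section Aux
variable {V : Type*} [CoQuantale V]

lemma zero_le'' (x : V) : (0 : V) ≤ x := (CoQuantale.bot_eq_zero (V := V)) ▸ bot_le

lemma add_le_add_left'' (c : V) {x y : V} (h : x ≤ y) : c + x ≤ c + y := by
  have h1 : sInf ({x, y} : Set V) = x := by
    rw [sInf_pair]; exact inf_eq_left.mpr h
  have h2 := CoQuantale.add_sInf c {x, y}
  rw [h1] at h2
  rw [h2]
  exact iInf₂_le y (by simp)

end Aux

lemma eq_zero_of_forall_le {V : Type*} [ValueCoQuantale V] (x : V)
    (h : ∀ ε : V, cwb (0 : V) ε → x ≤ ε) : x = 0 := by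
  refine le_antisymm ?_ (zero_le'' x)
  conv_rhs => rw [ValueCoQuantale.completely_distrib (0 : V)]
  exact le_sInf fun b hb => h b hb

/-- discrete Cauchy criteria. -/
theorem discrete_cauchy {V : Type*} [ValueCoQuantale V] {K : Type*} [Nonempty K]
    (a : K → V) :
    ((⨅ k, ⨆ l, cosub (a l) (a k)) = 0 ↔
      ∀ ε : V, cwb (0 : V) ε → ∃ k : K, cosub (⨆ l, a l) ε ≤ a k) ∧
    ((⨅ k, ⨆ l, cosub (a k) (a l)) = 0 ↔
      ∀ ε : V, cwb (0 : V) ε → ∃ k : K, cosub (a k) ε ≤ ⨅ l, a l) := by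
  constructor
  · constructor
    · intro h ε hε
      obtain ⟨y, hy, hyε⟩ := hε (Set.range fun k => ⨆ l, cosub (a l) (a k))
        (by rw [sInf_range, h])
      obtain ⟨k, rfl⟩ := hy
      refine ⟨k, cosub_le_iff.mpr ?_⟩
      rw [add_comm]
      refine iSup_le fun l => ?_
      exact cosub_le_iff.mp (le_trans (le_iSup (fun l => cosub (a l) (a k)) l) hyε)
    · intro h
      refine eq_zero_of_forall_le _ fun ε hε => ?_
      obtain ⟨k, hk⟩ := h ε hε
      have hS : (⨆ l, a l) ≤ a k + ε := cosub_le_iff.mp hk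
      refine le_trans (iInf_le _ k) (iSup_le fun l => cosub_le_iff.mpr ?_)
      rw [add_comm]
      exact le_trans (le_iSup a l) hS
  · constructor
    · intro h ε hε
      obtain ⟨y, hy, hyε⟩ := hε (Set.range fun k => ⨆ l, cosub (a k) (a l))
        (by rw [sInf_range, h])
      obtain ⟨k, rfl⟩ := hy
      refine ⟨k, cosub_le_iff.mpr ?_⟩
      rw [add_comm]
      have heq : ε + ⨅ l, a l = ⨅ l, (ε + a l) := by
        rw [iInf, CoQuantale.add_sInf, iInf_range]
      rw [heq]
      refine le_iInf fun l => ?_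
      exact cosub_le_iff.mp (le_trans (le_iSup (fun l => cosub (a k) (a l)) l) hyε)
    · intro h
      refine eq_zero_of_forall_le _ fun ε hε => ?_
      obtain ⟨k, hk⟩ := h ε hε
      have hk' : a k ≤ ε + ⨅ l, a l := by
        rw [add_comm]; exact cosub_le_iff.mp hk
      refine le_trans (iInf_le _ k) (iSup_le fun l => cosub_le_iff.mpr ?_)
      exact hk'.trans (add_le_add_left'' ε (iInf_le a l))
end

section
/- Let V be a value co-quantale with symmetric distance d_V, D an ultrafilter on a set I, and (M_i, d_{M_i})_{i∈I} a family of V-continuity spaces. Let (x_i), (y_i), (z_i) ∈ ∏_{i∈I} M_i, and suppose a ∈ V is a D-ultralimit of (d_{M_i}(x_i,y_i))_{i∈I}, b ∈ V is a D-ultralimit of (d_{M_i}(x_i,z_i))_{i∈I}, and c ∈ V is a D-ultralimit of (d_{M_i}(z_i,y_i))_{i∈I}. Then a ≤ b + c. (Hence the D-product distance on ∏_{i∈I} M_i satisfies the transitivity axiom of a V-continuity space.) -/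
section Aux
variable {V : Type*} [CoQuantale V]

lemma my_zero_le (a : V) : (0 : V) ≤ a := by rw [← CoQuantale.bot_eq_zero]; exact bot_le

lemma my_add_le_add_left (a : V) {b c : V} (h : b ≤ c) : a + b ≤ a + c := by
  have h2 : sInf ({b, c} : Set V) = b := by
    rw [sInf_insert, sInf_singleton]; exact inf_eq_left.mpr h
  have h3 := CoQuantale.add_sInf a {b, c}
  rw [h2] at h3
  rw [h3]
  exact iInf₂_le c (by simp)

lemma my_add_le_add {a b c d : V} (h1 : a ≤ c) (h2 : b ≤ d) : a + b ≤ c + d := by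
  calc a + b ≤ a + d := my_add_le_add_left a h2
    _ = d + a := add_comm _ _
    _ ≤ d + c := my_add_le_add_left d h1
    _ = c + d := add_comm _ _

end Aux

section Aux2
variable {V : Type*} [ValueCoQuantale V]

lemma sInf_pos_zero : sInf {b : V | cwb (0:V) b} = 0 :=
  (ValueCoQuantale.completely_distrib (0:V)).symm

lemma halving {ε : V} (hε : cwb (0:V) ε) : ∃ δ : V, cwb (0:V) δ ∧ δ + δ ≤ ε := by
  set A : Set V := {x | ∃ p q : V, cwb (0:V) p ∧ cwb (0:V) q ∧ x = p + q} with hA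
  have hInf : sInf A ≤ 0 := by
    rw [← sInf_pos_zero]
    refine le_sInf fun p hp => ?_
    have : sInf A ≤ p + sInf {b : V | cwb (0:V) b} := by
      rw [CoQuantale.add_sInf]
      exact le_iInf₂ fun q hq => sInf_le ⟨p, q, hp, hq, rfl⟩
    rwa [sInf_pos_zero, add_zero] at this
  obtain ⟨w, ⟨p, q, hp, hq, rfl⟩, hw⟩ := hε A hInf
  refine ⟨p ⊓ q, ValueCoQuantale.cwb_inf p q hp hq, ?_⟩
  exact (my_add_le_add inf_le_left inf_le_right).trans hw

lemma symd_le_left {l w ε : V} (h : symd l w ≤ ε) : l ≤ ε + w := by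
  have h1 : cosub l w ≤ ε := le_trans le_sup_left h
  exact (le_cosub_add l w).trans (my_add_le_add h1 le_rfl)

lemma symd_le_right {l w ε : V} (h : symd l w ≤ ε) : w ≤ ε + l := by
  have h1 : cosub w l ≤ ε := le_trans le_sup_right h
  exact (le_cosub_add w l).trans (my_add_le_add h1 le_rfl)
end Aux2

/-- the `D`-product distance satisfies the transitivity axiom. -/
theorem dproduct_triangle {V : Type*} [ValueCoQuantale V] {I : Type*}
    (D : Ultrafilter I) (M : I → Type*) (d : ∀ i, M i → M i → V)
    (hrefl : ∀ i (x : M i), d i x x = 0)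
    (htrans : ∀ i (x y z : M i), d i x y ≤ d i x z + d i z y)
    (x y z : ∀ i, M i) (a b c : V)
    (ha : IsUltralimit D (fun i => d i (x i) (y i)) a)
    (hb : IsUltralimit D (fun i => d i (x i) (z i)) b)
    (hc : IsUltralimit D (fun i => d i (z i) (y i)) c) :
    a ≤ b + c := by
  have key : ∀ δ : V, cwb (0:V) δ → a ≤ b + c + δ := by
    intro δ hδ
    obtain ⟨δ₁, hδ₁, hδ₁δ⟩ := halving hδ
    obtain ⟨ε, hε, hεδ₁⟩ := halving hδ₁
    have hS : {i | symd a (d i (x i) (y i)) ≤ ε} ∩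
        ({i | symd b (d i (x i) (z i)) ≤ ε} ∩ {i | symd c (d i (z i) (y i)) ≤ ε}) ∈ D :=
      Filter.inter_mem (ha ε hε) (Filter.inter_mem (hb ε hε) (hc ε hε))
    obtain ⟨i, h1, h2, h3⟩ := Ultrafilter.nonempty_of_mem hS
    have e1 : a ≤ ε + d i (x i) (y i) := symd_le_left h1
    have e2 : d i (x i) (z i) ≤ ε + b := symd_le_right h2
    have e3 : d i (z i) (y i) ≤ ε + c := symd_le_right h3
    have hεle : ε ≤ δ₁ := by
      have h4 : ε + 0 ≤ ε + ε := my_add_le_add_left ε (my_zero_le ε)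
      rw [add_zero] at h4; exact h4.trans hεδ₁
    calc a ≤ ε + d i (x i) (y i) := e1
      _ ≤ ε + (d i (x i) (z i) + d i (z i) (y i)) := my_add_le_add_left _ (htrans i _ _ _)
      _ ≤ ε + ((ε + b) + (ε + c)) := my_add_le_add_left _ (my_add_le_add e2 e3)
      _ = b + c + (ε + (ε + ε)) := by abel
      _ ≤ b + c + δ := my_add_le_add_left _ ((my_add_le_add hεle hεδ₁).trans hδ₁δ)
  have h5 : a ≤ (b + c) + sInf {e : V | cwb (0:V) e} := by
    rw [CoQuantale.add_sInf]
    exact le_iInf₂ fun e he => key e he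
  rwa [sInf_pos_zero, add_zero] at h5
end
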